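/- arXiv:2311.06060 — 10 statements merged into one kernel-verified Lean document; each statement's English description precedes it below -/
import Mathlib

section
/- Let C_1 × ... × C_r ⊆ G_q(t_1,n) × ... × G_q(t_r,n) be a Cartesian product of constant dimension codes. Then C_1 × ... × C_r is a generating set of flag codes of type (t_1,...,t_r) if and only if the set C = (C_1 × ... × C_r) ∩ F_q((t_1,...,t_r),n) is nonempty and satisfies C_i' = C_i for all 1 ≤ i ≤ r, where C_i' denotes the i-th projected code of C. -/
noncomputable section

open Submodule

def IsFlag (q : Type*) [Field q] (n r : ℕ) (t : Fin r → ℕ)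
    (F : Fin r → Submodule q (Fin n → q)) : Prop :=
  StrictMono F ∧ ∀ i, Module.finrank q ↥(F i) = t i

def proj (q : Type*) [Field q] (n r : ℕ)
    (C : Set (Fin r → Submodule q (Fin n → q))) (i : Fin r) :
    Set (Submodule q (Fin n → q)) :=
  (fun F => F i) '' C

def IsFlagCode (q : Type*) [Field q] (n r : ℕ) (t : Fin r → ℕ)
    (C : Set (Fin r → Submodule q (Fin n → q))) : Prop :=
  C.Nonempty ∧ ∀ F ∈ C, IsFlag q n r t F

def GeneratedBy (q : Type*) [Field q] (n r : ℕ) (t : Fin r → ℕ)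
    (Cs : Fin r → Set (Submodule q (Fin n → q)))
    (C : Set (Fin r → Submodule q (Fin n → q))) : Prop :=
  IsFlagCode q n r t C ∧ ∀ i, proj q n r C i = Cs i

def IsGeneratingSet (q : Type*) [Field q] (n r : ℕ) (t : Fin r → ℕ)
    (Cs : Fin r → Set (Submodule q (Fin n → q))) : Prop :=
  ∃ C, GeneratedBy q n r t Cs C

def prodInter (q : Type*) [Field q] (n r : ℕ) (t : Fin r → ℕ)
    (Cs : Fin r → Set (Submodule q (Fin n → q))) :
    Set (Fin r → Submodule q (Fin n → q)) :=
  {F | IsFlag q n r t F ∧ ∀ i, F i ∈ Cs i}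

def SIC (q : Type*) [Field q] (n r : ℕ)
    (C : Set (Fin r → Submodule q (Fin n → q))) : Prop :=
  ∀ F ∈ C, ∀ F' ∈ C, ∀ (i : ℕ) (hi : i + 1 < r),
    F ⟨i, by omega⟩ < F' ⟨i + 1, hi⟩ →
    (fun j : Fin r => if j.val ≤ i then F j else F' j) ∈ C

def mult (q : Type*) [Field q] (n r : ℕ)
    (C : Set (Fin r → Submodule q (Fin n → q)))
    (F : Fin r → Submodule q (Fin n → q)) (i : Fin r) : ℕ :=
  Set.ncard {G ∈ C | G i = F i}

def actS (q : Type*) [Field q] (n : ℕ) (A : GL (Fin n) q)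
    (U : Submodule q (Fin n → q)) : Submodule q (Fin n → q) :=
  U.map (Matrix.vecMulLinear (A : Matrix (Fin n) (Fin n) q))

def actC (q : Type*) [Field q] (n r : ℕ) (A : GL (Fin n) q)
    (C : Set (Fin r → Submodule q (Fin n → q))) :
    Set (Fin r → Submodule q (Fin n → q)) :=
  (fun F => fun i => actS q n A (F i)) '' C

def Increasing (q : Type*) [Field q] (n r : ℕ)
    (C : Set (Fin r → Submodule q (Fin n → q))) : Prop :=
  ∀ (i : ℕ) (hi : i + 1 < r), ∀ V ∈ proj q n r C ⟨i + 1, hi⟩,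
    ∃! U, U ∈ proj q n r C ⟨i, by omega⟩ ∧ U < V

def Decreasing (q : Type*) [Field q] (n r : ℕ)
    (C : Set (Fin r → Submodule q (Fin n → q))) : Prop :=
  ∀ (i : ℕ) (hi : i + 1 < r), ∀ U ∈ proj q n r C ⟨i, by omega⟩,
    ∃! V, V ∈ proj q n r C ⟨i + 1, hi⟩ ∧ U < V

def distS (q : Type*) [Field q] (n : ℕ) (U V : Submodule q (Fin n → q)) : ℕ :=
  Module.finrank q ↥(U ⊔ V) - Module.finrank q ↥(U ⊓ V)

def maxDist (q : Type*) [Field q] (n k : ℕ)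
    (D : Set (Submodule q (Fin n → q))) : Prop :=
  ∀ U ∈ D, ∀ V ∈ D, U ≠ V → distS q n U V = min (2 * k) (2 * (n - k))

theorem generatingSet_iff_prodInter
    (q : Type*) [Field q] [Fintype q] (n r : ℕ) (t : Fin r → ℕ)
    (ht : StrictMono t) (htpos : ∀ i, 0 < t i) (htn : ∀ i, t i < n)
    (Cs : Fin r → Set (Submodule q (Fin n → q)))
    (hne : ∀ i, (Cs i).Nonempty)
    (hdim : ∀ i, ∀ U ∈ Cs i, Module.finrank q ↥U = t i) :
    IsGeneratingSet q n r t Cs ↔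
      ((prodInter q n r t Cs).Nonempty ∧
        ∀ i, proj q n r (prodInter q n r t Cs) i = Cs i) := by
  constructor
  · rintro ⟨C, ⟨⟨hCne, hflag⟩, hproj⟩⟩
    have hsub : C ⊆ prodInter q n r t Cs := by
      intro F hF
      refine ⟨hflag F hF, fun i => ?_⟩
      rw [← hproj i]
      exact ⟨F, hF, rfl⟩
    constructor
    · exact hCne.mono hsub
    · intro i
      apply Set.Subset.antisymm
      · rintro _ ⟨F, hF, rfl⟩
        exact hF.2 i
      · rw [← hproj i]
        rintro _ ⟨F, hF, rfl⟩
        exact ⟨F, hsub hF, rfl⟩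
  · rintro ⟨h1, h2⟩
    exact ⟨prodInter q n r t Cs, ⟨h1, fun F hF => hF.1⟩, h2⟩
end
end

section
/- Let C_1 × ... × C_r be a Cartesian product of constant dimension codes in G_q(t_1,n) × ... × G_q(t_r,n). Then C_1 × ... × C_r is a generating set of flag codes if and only if for each i ∈ {1,...,r} and each subspace U_i ∈ C_i, there exist U_{i-1} ∈ C_{i-1} and U_{i+1} ∈ C_{i+1} with U_{i-1} ⊊ U_i ⊊ U_{i+1}, where by convention C_0 = {{0}} and C_{r+1} = {F_q^n}. -/
noncomputable section

open Submodule

/-- The extended family of codes, with `C_0 = {0}` and `C_{r+1} = {F_q^n}`: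
`ext Cs j` is the code of index `j` in the list `C_0, C_1, ..., C_r, C_{r+1}`. -/
def ext (q : Type*) [Field q] (n r : ℕ)
    (Cs : Fin r → Set (Submodule q (Fin n → q))) : ℕ → Set (Submodule q (Fin n → q)) :=
  fun j => if hj : j = 0 then {⊥} else if h : j ≤ r then Cs ⟨j - 1, by omega⟩ else {⊤}



lemma myStrictMono_of_adj {α : Type*} [Preorder α] {r : ℕ} {f : Fin r → α}
    (h : ∀ j (hj : j + 1 < r), f ⟨j, by omega⟩ < f ⟨j + 1, hj⟩) : StrictMono f := by
  have key : ∀ b (hb : b < r), ∀ a (ha : a < r), a < b → f ⟨a, ha⟩ < f ⟨b, hb⟩ := by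
    intro b
    induction b with
    | zero => omega
    | succ b ih =>
      intro hb a ha hab
      rcases Nat.lt_or_ge a b with h' | h'
      · exact lt_trans (ih (by omega) a ha h') (h b hb)
      · have : a = b := by omega
        subst this
        exact h a hb
  intro a b hab
  exact key b.val b.isLt a.val a.isLt hab

section chains

variable {q : Type*} [Field q] {n r : ℕ} (Cs : Fin r → Set (Submodule q (Fin n → q)))

lemma ext_zero : ext q n r Cs 0 = {⊥} := rfl

lemma ext_mid {j : ℕ} (hj : j ≠ 0) (hjr : j ≤ r) :
    ext q n r Cs j = Cs ⟨j - 1, by omega⟩ := by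
  unfold _root_.ext; rw [dif_neg hj, dif_pos hjr]

lemma ext_top {j : ℕ} (hj : r < j) : ext q n r Cs j = {⊤} := by
  have h0 : j ≠ 0 := by omega
  have h1 : ¬ j ≤ r := by omega
  unfold _root_.ext; rw [dif_neg h0, dif_neg h1]

open Classical in
def predC (j : ℕ) (V : Submodule q (Fin n → q)) : Submodule q (Fin n → q) :=
  if h : ∃ P, P ∈ ext q n r Cs j ∧ P < V then h.choose else ⊥

open Classical in
def succC (j : ℕ) (V : Submodule q (Fin n → q)) : Submodule q (Fin n → q) :=
  if h : ∃ N, N ∈ ext q n r Cs j ∧ V < N then h.choose else ⊤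

lemma predC_spec {j : ℕ} {V : Submodule q (Fin n → q)}
    (h : ∃ P, P ∈ ext q n r Cs j ∧ P < V) :
    predC Cs j V ∈ ext q n r Cs j ∧ predC Cs j V < V := by
  unfold predC; rw [dif_pos h]; exact h.choose_spec

lemma succC_spec {j : ℕ} {V : Submodule q (Fin n → q)}
    (h : ∃ N, N ∈ ext q n r Cs j ∧ V < N) :
    succC Cs j V ∈ ext q n r Cs j ∧ V < succC Cs j V := by
  unfold succC; rw [dif_pos h]; exact h.choose_spec

def dchain (i0 : ℕ) (U : Submodule q (Fin n → q)) : ℕ → Submodule q (Fin n → q)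
  | 0 => U
  | k + 1 => predC Cs (i0 - k) (dchain i0 U k)

def uchain (i0 : ℕ) (U : Submodule q (Fin n → q)) : ℕ → Submodule q (Fin n → q)
  | 0 => U
  | k + 1 => succC Cs (i0 + k + 2) (uchain i0 U k)

variable (H : ∀ i : Fin r, ∀ U ∈ Cs i,
        (∃ P ∈ ext q n r Cs i.val, P < U) ∧
        (∃ N ∈ ext q n r Cs (i.val + 2), U < N))
variable {i0 : ℕ} (hi0 : i0 < r) {U : Submodule q (Fin n → q)}
variable (hU : U ∈ Cs ⟨i0, hi0⟩)

include H hi0 hU in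
lemma dchain_mem : ∀ k, (hk : k ≤ i0) → dchain Cs i0 U k ∈ Cs ⟨i0 - k, by omega⟩ := by
  intro k
  induction k with
  | zero => intro _; exact hU
  | succ k ih =>
    intro hk
    have hm := ih (by omega)
    have hex := (H ⟨i0 - k, by omega⟩ _ hm).1
    have hs := (predC_spec Cs hex).1
    rw [ext_mid (j := i0 - k) Cs (by omega) (by omega)] at hs
    have : (⟨i0 - k - 1, by omega⟩ : Fin r) = ⟨i0 - (k + 1), by omega⟩ := by
      apply Fin.ext; simp; omega
    rw [this] at hs
    exact hs

include H hi0 hU in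
lemma dchain_lt : ∀ k, k ≤ i0 → dchain Cs i0 U (k + 1) < dchain Cs i0 U k := by
  intro k hk
  have hm := dchain_mem Cs H hi0 hU k hk
  have hex := (H ⟨i0 - k, by omega⟩ _ hm).1
  exact (predC_spec Cs hex).2

include H hi0 hU in
lemma uchain_mem : ∀ k, (hk : i0 + k < r) → uchain Cs i0 U k ∈ Cs ⟨i0 + k, hk⟩ := by
  intro k
  induction k with
  | zero => intro _; exact hU
  | succ k ih =>
    intro hk
    have hm := ih (by omega)
    have hex := (H ⟨i0 + k, by omega⟩ _ hm).2
    have hs := (succC_spec Cs hex).1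
    rw [ext_mid (j := i0 + k + 2) Cs (by omega) (by omega)] at hs
    have : (⟨i0 + k + 2 - 1, by omega⟩ : Fin r) = ⟨i0 + (k + 1), hk⟩ := by
      apply Fin.ext; simp; omega
    rw [this] at hs
    exact hs

include H hi0 hU in
lemma uchain_lt : ∀ k, i0 + k < r → uchain Cs i0 U k < uchain Cs i0 U (k + 1) := by
  intro k hk
  have hm := uchain_mem Cs H hi0 hU k hk
  have hex := (H ⟨i0 + k, by omega⟩ _ hm).2
  exact (succC_spec Cs hex).2

end chains

theorem generatingSet_iff_neighbours
    (q : Type*) [Field q] [Fintype q] (n r : ℕ) (t : Fin r → ℕ)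
    (ht : StrictMono t) (htpos : ∀ i, 0 < t i) (htn : ∀ i, t i < n)
    (Cs : Fin r → Set (Submodule q (Fin n → q)))
    (hne : ∀ i, (Cs i).Nonempty)
    (hdim : ∀ i, ∀ U ∈ Cs i, Module.finrank q ↥U = t i) :
    IsGeneratingSet q n r t Cs ↔
      ∀ i : Fin r, ∀ U ∈ Cs i,
        (∃ P ∈ ext q n r Cs i.val, P < U) ∧
        (∃ N ∈ ext q n r Cs (i.val + 2), U < N) := by
  constructor
  · rintro ⟨C, ⟨⟨hCne, hCflag⟩, hproj⟩⟩ i U hU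
    have hU' := hU
    rw [← hproj i] at hU
    obtain ⟨F, hF, hFi⟩ := hU
    obtain ⟨hmono, hdims⟩ := hCflag F hF
    constructor
    · by_cases h0 : i.val = 0
      · refine ⟨⊥, ?_, ?_⟩
        · rw [h0, ext_zero]; exact Set.mem_singleton _
        · apply bot_lt_iff_ne_bot.mpr
          intro hb
          have hd := hdim i U hU'
          rw [hb, finrank_bot] at hd
          exact absurd hd.symm (Nat.ne_of_gt (htpos i))
      · refine ⟨F ⟨i.val - 1, by omega⟩, ?_, ?_⟩
        · rw [ext_mid (j := i.val) Cs h0 (by omega), ← hproj]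
          exact ⟨F, hF, rfl⟩
        · rw [← hFi]
          exact hmono (Fin.lt_def.mpr (by simp; omega))
    · by_cases h1 : i.val + 1 < r
      · refine ⟨F ⟨i.val + 1, h1⟩, ?_, ?_⟩
        · rw [ext_mid (j := i.val + 2) Cs (by omega) (by omega), ← hproj]
          exact ⟨F, hF, rfl⟩
        · rw [← hFi]
          exact hmono (Fin.lt_def.mpr (by simp))
      · refine ⟨⊤, ?_, ?_⟩
        · rw [ext_top Cs (by omega)]; exact Set.mem_singleton _
        · apply lt_top_iff_ne_top.mpr
          intro htop
          have hd := hdim i U hU'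
          rw [htop, finrank_top, Module.finrank_fin_fun] at hd
          exact absurd hd (Nat.ne_of_gt (htn i))
  · intro H
    rcases Nat.eq_zero_or_pos r with hr | hr
    · subst hr
      refine ⟨Set.univ, ⟨⟨⟨fun _ => ⊥, trivial⟩, ?_⟩, fun i => i.elim0⟩⟩
      intro F _
      exact ⟨fun a => a.elim0, fun i => i.elim0⟩
    · have key : ∀ (i0 : Fin r), ∀ U ∈ Cs i0, ∃ F, F ∈ prodInter q n r t Cs ∧ F i0 = U := by
        intro i0 U hU
        set F : Fin r → Submodule q (Fin n → q) :=
          fun j => if j.val ≤ i0.val then dchain Cs i0.val U (i0.val - j.val)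
                   else uchain Cs i0.val U (j.val - i0.val) with hFdef
        have hFle : ∀ (j : Fin r), j.val ≤ i0.val →
            F j = dchain Cs i0.val U (i0.val - j.val) := by
          intro j hj; simp only [hFdef]; exact if_pos hj
        have hFgt : ∀ (j : Fin r), ¬ j.val ≤ i0.val →
            F j = uchain Cs i0.val U (j.val - i0.val) := by
          intro j hj; simp only [hFdef]; exact if_neg hj
        have hmem : ∀ j : Fin r, F j ∈ Cs j := by
          intro j
          by_cases hj : j.val ≤ i0.val
          · have hm := dchain_mem Cs H i0.isLt hU (i0.val - j.val) (by omega)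
            have e : (⟨i0.val - (i0.val - j.val), by omega⟩ : Fin r) = j :=
              Fin.ext (by simp; omega)
            rw [e] at hm
            rw [hFle j hj]; exact hm
          · have hm := uchain_mem Cs H i0.isLt hU (j.val - i0.val) (by omega)
            have e : (⟨i0.val + (j.val - i0.val), by omega⟩ : Fin r) = j :=
              Fin.ext (by simp; omega)
            rw [e] at hm
            rw [hFgt j hj]; exact hm
        have hsm : StrictMono F := by
          apply myStrictMono_of_adj
          intro j hj
          by_cases hj1 : j + 1 ≤ i0.val
          · rw [hFle ⟨j, by omega⟩ (le_trans (Nat.le_succ j) hj1),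
                hFle ⟨j + 1, hj⟩ hj1]
            show dchain Cs i0.val U (i0.val - j) < dchain Cs i0.val U (i0.val - (j + 1))
            have e1 : i0.val - j = (i0.val - (j + 1)) + 1 := by omega
            rw [e1]
            exact dchain_lt Cs H i0.isLt hU _ (by omega)
          · by_cases hj2 : j ≤ i0.val
            · have hji : j = i0.val := by omega
              rw [hFle ⟨j, by omega⟩ hj2, hFgt ⟨j + 1, hj⟩ hj1]
              show dchain Cs i0.val U (i0.val - j) < uchain Cs i0.val U (j + 1 - i0.val)
              have e1 : i0.val - j = 0 := by omega
              have e2 : j + 1 - i0.val = 1 := by omega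
              rw [e1, e2]
              exact uchain_lt Cs H i0.isLt hU 0 (by omega)
            · rw [hFgt ⟨j, by omega⟩ hj2, hFgt ⟨j + 1, hj⟩ hj1]
              show uchain Cs i0.val U (j - i0.val) < uchain Cs i0.val U (j + 1 - i0.val)
              have e2 : j + 1 - i0.val = (j - i0.val) + 1 := by omega
              rw [e2]
              exact uchain_lt Cs H i0.isLt hU _ (by omega)
        refine ⟨F, ⟨⟨hsm, fun i => hdim i _ (hmem i)⟩, hmem⟩, ?_⟩
        rw [hFle i0 le_rfl, Nat.sub_self]
        rfl
      refine ⟨prodInter q n r t Cs, ⟨⟨?_, fun F hF => hF.1⟩, ?_⟩⟩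
      · obtain ⟨U, hU⟩ := hne ⟨0, hr⟩
        obtain ⟨F, hF, _⟩ := key _ U hU
        exact ⟨F, hF⟩
      · intro i
        apply Set.Subset.antisymm
        · rintro V ⟨F, hF, rfl⟩
          exact hF.2 i
        · intro U hU
          obtain ⟨F, hF, hFi⟩ := key i U hU
          exact ⟨F, hF, hFi⟩
end
end

section
/- Let C_1 × ... × C_r ⊆ G_q(t_1,n) × ... × G_q(t_r,n) be a generating set of flag codes, and let C = (C_1 × ... × C_r) ∩ F_q((t_1,...,t_r),n). Then C is a subspace-inclusion-closed (SIC) flag code generated by C_1 × ... × C_r. -/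
noncomputable section

open Submodule

theorem prodInter_SIC_and_generated
    (q : Type*) [Field q] [Fintype q] (n r : ℕ) (t : Fin r → ℕ)
    (ht : StrictMono t) (htpos : ∀ i, 0 < t i) (htn : ∀ i, t i < n)
    (Cs : Fin r → Set (Submodule q (Fin n → q)))
    (hne : ∀ i, (Cs i).Nonempty)
    (hdim : ∀ i, ∀ U ∈ Cs i, Module.finrank q ↥U = t i)
    (hgen : IsGeneratingSet q n r t Cs) :
    SIC q n r (prodInter q n r t Cs) ∧
      GeneratedBy q n r t Cs (prodInter q n r t Cs) :=
by
  obtain ⟨C, ⟨⟨F0, hF0⟩, hflag⟩, hproj⟩ := hgen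
  have hsub : C ⊆ prodInter q n r t Cs := by
    intro F hF
    exact ⟨hflag F hF, fun i => by rw [← hproj i]; exact ⟨F, hF, rfl⟩⟩
  constructor
  · intro F hF F' hF' i hi hlt
    refine ⟨⟨?_, ?_⟩, ?_⟩
    · intro j k hjk
      have hjk' : (j : ℕ) < k := hjk
      by_cases hj : (j : ℕ) ≤ i <;> by_cases hk : (k : ℕ) ≤ i <;>
        simp only [hj, hk, if_true, if_false]
      · exact hF.1.1 hjk
      · calc F j ≤ F ⟨i, by omega⟩ := hF.1.1.monotone (by simp [Fin.le_def]; omega)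
          _ < F' ⟨i+1, hi⟩ := hlt
          _ ≤ F' k := hF'.1.1.monotone (by simp [Fin.le_def]; omega)
      · omega
      · exact hF'.1.1 hjk
    · intro j
      by_cases hj : (j : ℕ) ≤ i
      · beta_reduce; rw [if_pos hj]; exact hF.1.2 j
      · beta_reduce; rw [if_neg hj]; exact hF'.1.2 j
    · intro j
      by_cases hj : (j : ℕ) ≤ i
      · beta_reduce; rw [if_pos hj]; exact hF.2 j
      · beta_reduce; rw [if_neg hj]; exact hF'.2 j
  · refine ⟨⟨⟨F0, hsub hF0⟩, fun F hF => hF.1⟩, fun i => ?_⟩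
    ext U
    constructor
    · rintro ⟨F, hF, rfl⟩; exact hF.2 i
    · intro hU
      rw [← hproj i] at hU
      obtain ⟨F, hF, rfl⟩ := hU
      exact ⟨F, hsub hF, rfl⟩
end
end

section
/- Let C_1 × ... × C_r be a generating set of flag codes and C = (C_1 × ... × C_r) ∩ F_q((t_1,...,t_r),n). If C' is any flag code generated by C_1 × ... × C_r, then C' ⊆ C; moreover, C' = C if and only if C' is subspace-inclusion-closed. In particular, C is the unique SIC flag code generated by C_1 × ... × C_r. -/
noncomputable section

open Submodule

theorem prodInter_maximal_and_unique_SIC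
    (q : Type*) [Field q] [Fintype q] (n r : ℕ) (t : Fin r → ℕ)
    (ht : StrictMono t) (htpos : ∀ i, 0 < t i) (htn : ∀ i, t i < n)
    (Cs : Fin r → Set (Submodule q (Fin n → q)))
    (hne : ∀ i, (Cs i).Nonempty)
    (hdim : ∀ i, ∀ U ∈ Cs i, Module.finrank q ↥U = t i)
    (hgen : IsGeneratingSet q n r t Cs) :
    (∀ C', GeneratedBy q n r t Cs C' →
        C' ⊆ prodInter q n r t Cs ∧ (C' = prodInter q n r t Cs ↔ SIC q n r C')) ∧
    (∀ C'', GeneratedBy q n r t Cs C'' → SIC q n r C'' → C'' = prodInter q n r t Cs) := by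
  have hsub : ∀ C', GeneratedBy q n r t Cs C' → C' ⊆ prodInter q n r t Cs := by
    rintro C' ⟨⟨hne', hflag⟩, hproj⟩ F hF
    exact ⟨hflag F hF, fun i => (hproj i) ▸ ⟨F, hF, rfl⟩⟩
  have hSICpi : SIC q n r (prodInter q n r t Cs) := by
    intro F hF F' hF' i hi hlt
    refine ⟨⟨?_, ?_⟩, ?_⟩
    · intro a b hab
      by_cases ha : a.val ≤ i <;> by_cases hb : b.val ≤ i <;>
        simp only [ha, hb, if_true, if_false]
      · exact hF.1.1 hab
      · refine lt_of_le_of_lt (hF.1.1.monotone (show a ≤ ⟨i, by omega⟩ from ha))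
          (lt_of_lt_of_le hlt (hF'.1.1.monotone ?_))
        show i + 1 ≤ b.val; omega
      · exact absurd hab (by omega)
      · exact hF'.1.1 hab
    · intro j
      show Module.finrank q ↥(if j.val ≤ i then F j else F' j) = t j
      by_cases h : j.val ≤ i
      · rw [if_pos h]; exact hF.1.2 j
      · rw [if_neg h]; exact hF'.1.2 j
    · intro j; by_cases h : j.val ≤ i
      · simpa only [if_pos h] using hF.2 j
      · simpa only [if_neg h] using hF'.2 j
  have hsup : ∀ C', GeneratedBy q n r t Cs C' → SIC q n r C' →
      prodInter q n r t Cs ⊆ C' := by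
    rintro C' ⟨⟨hne', hflag⟩, hproj⟩ hsic F hF
    have key : ∀ m, ∃ H ∈ C', ∀ j : Fin r, r - m ≤ j.val → H j = F j := by
      intro m
      induction m with
      | zero =>
        obtain ⟨H, hH⟩ := hne'
        exact ⟨H, hH, fun j hj => absurd j.isLt (by omega)⟩
      | succ m ih =>
        obtain ⟨H, hH, hHe⟩ := ih
        by_cases hm : r ≤ m
        · exact ⟨H, hH, fun j hj => hHe j (by omega)⟩
        · set k := r - (m + 1) with hkdef
          have hk : k < r := by omega
          have hmem : F ⟨k, hk⟩ ∈ Cs ⟨k, hk⟩ := hF.2 _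
          rw [← hproj ⟨k, hk⟩] at hmem
          obtain ⟨G, hG, hGk0⟩ := hmem
          have hGk : G ⟨k, hk⟩ = F ⟨k, hk⟩ := hGk0
          by_cases hk1 : k + 1 < r
          · have hlt : G ⟨k, hk⟩ < H ⟨k + 1, hk1⟩ := by
              rw [hGk, hHe ⟨k + 1, hk1⟩ (show r - m ≤ k + 1 by omega)]
              exact hF.1.1 (show (⟨k, hk⟩ : Fin r) < ⟨k + 1, hk1⟩ from by
                simp [Fin.lt_def])
            refine ⟨_, hsic G hG H hH k hk1 hlt, fun j hj => ?_⟩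
            by_cases hjk : j.val ≤ k
            · have hje : j = ⟨k, hk⟩ := Fin.ext (show j.val = k by omega)
              rw [hje, if_pos (show ((⟨k, hk⟩ : Fin r)).val ≤ k from le_refl k), hGk]
            · rw [if_neg hjk]
              exact hHe j (by omega)
          · refine ⟨G, hG, fun j hj => ?_⟩
            have hje : j = ⟨k, hk⟩ := Fin.ext (show j.val = k by have := j.isLt; omega)
            rw [hje]; exact hGk
    obtain ⟨H, hH, hHe⟩ := key r
    have : H = F := funext fun j => hHe j (by omega)
    exact this ▸ hH
  constructor
  · intro C' hC'
    refine ⟨hsub C' hC', ?_, fun hs => Set.Subset.antisymm (hsub C' hC') (hsup C' hC' hs)⟩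
    intro he; rw [he]; exact hSICpi
  · intro C'' hC'' hs
    exact Set.Subset.antisymm (hsub C'' hC'') (hsup C'' hC'' hs)
end
end

section
/- A flag code C of type (t_1,...,t_r) on F_q^n with projected codes C_1,...,C_r is SIC if and only if (C_1 × ... × C_r) ∩ F_q((t_1,...,t_r),n) ⊆ C (equivalently, equals C). -/
noncomputable section

open Submodule

theorem SIC_iff_prodInter_subset
    (q : Type*) [Field q] [Fintype q] (n r : ℕ) (t : Fin r → ℕ)
    (ht : StrictMono t) (htpos : ∀ i, 0 < t i) (htn : ∀ i, t i < n)
    (C : Set (Fin r → Submodule q (Fin n → q)))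
    (hC : IsFlagCode q n r t C) :
    (SIC q n r C ↔ prodInter q n r t (proj q n r C) ⊆ C) ∧
    (SIC q n r C ↔ prodInter q n r t (proj q n r C) = C) := by
  have hsub : C ⊆ prodInter q n r t (proj q n r C) := by
    intro F hF
    exact ⟨hC.2 F hF, fun i => ⟨F, hF, rfl⟩⟩
  have main : SIC q n r C ↔ prodInter q n r t (proj q n r C) ⊆ C := by
    constructor
    · intro hS F hF
      obtain ⟨hflag, hproj⟩ := hF
      have key : ∀ m, m ≤ r → ∃ H ∈ C, ∀ j : Fin r, r - m ≤ j.val → H j = F j := by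
        intro m
        induction m with
        | zero =>
          intro _
          obtain ⟨H, hH⟩ := hC.1
          exact ⟨H, hH, fun j hj => absurd hj (by have := j.isLt; omega)⟩
        | succ m ih =>
          intro hm
          obtain ⟨H, hHC, hH⟩ := ih (by omega)
          obtain ⟨G, hGC, hG⟩ := hproj ⟨r - m - 1, by omega⟩
          replace hG : G ⟨r - m - 1, by omega⟩ = F ⟨r - m - 1, by omega⟩ := hG
          by_cases hm0 : m = 0
          · subst hm0
            refine ⟨G, hGC, fun j hj => ?_⟩
            have hje : j = ⟨r - 1, by omega⟩ := by
              apply Fin.ext; have := j.isLt; simp; omega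
            rw [hje]; simpa using hG
          · have hi : (r - m - 1) + 1 < r := by omega
            have hlt : G ⟨r - m - 1, by omega⟩ < H ⟨r - m - 1 + 1, hi⟩ := by
              rw [hG, hH _ (by simp; omega)]
              exact hflag.1 (by simp [Fin.lt_def])
            have hspl := hS G hGC H hHC (r - m - 1) hi hlt
            refine ⟨_, hspl, fun j hj => ?_⟩
            by_cases h : j.val ≤ r - m - 1
            · have hje : j = ⟨r - m - 1, by omega⟩ := Fin.ext (by simp; omega)
              simp only [if_pos h]
              rw [hje, hG]
            · simp only [if_neg h]
              exact hH j (by omega)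
      obtain ⟨H, hHC, hH⟩ := key r le_rfl
      have hHF : H = F := funext fun j => hH j (by omega)
      rwa [hHF] at hHC
    · intro hsub' F hF F' hF' i hi hlt
      apply hsub'
      have hFl := hC.2 F hF
      have hF'l := hC.2 F' hF'
      refine ⟨⟨?_, ?_⟩, ?_⟩
      · intro j k hjk
        have hjk' : j.val < k.val := hjk
        by_cases hj : j.val ≤ i <;> by_cases hk : k.val ≤ i
        · simp only [if_pos hj, if_pos hk]; exact hFl.1 hjk
        · simp only [if_pos hj, if_neg hk]
          calc F j ≤ F ⟨i, by omega⟩ := hFl.1.monotone (by simp [Fin.le_def]; omega)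
            _ < F' ⟨i+1, hi⟩ := hlt
            _ ≤ F' k := hF'l.1.monotone (by simp [Fin.le_def]; omega)
        · omega
        · simp only [if_neg hj, if_neg hk]; exact hF'l.1 hjk
      · intro j
        by_cases hj : (j : ℕ) ≤ i
        · exact (congrArg (fun U : Submodule q (Fin n → q) => Module.finrank q ↥U)
            (if_pos hj)).trans (hFl.2 j)
        · exact (congrArg (fun U : Submodule q (Fin n → q) => Module.finrank q ↥U)
            (if_neg hj)).trans (hF'l.2 j)
      · intro j
        by_cases hj : j.val ≤ i
        · simp only [if_pos hj]; exact ⟨F, hF, rfl⟩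
        · simp only [if_neg hj]; exact ⟨F', hF', rfl⟩
  exact ⟨main, main.trans ⟨fun h => le_antisymm h hsub, fun h => h.le⟩⟩
end
end

section
/- If C is a SIC flag code of type (t_1,...,t_r) on F_q^n, then its linear automorphism group equals the intersection of the linear automorphism groups of its projected codes: Aut(C) = ⋂_{i=1}^r Aut(C_i). -/
noncomputable section

open Submodule

lemma vecMulLinear_comp {q : Type*} [Field q] {n : ℕ}
    (A B : Matrix (Fin n) (Fin n) q) :
    (Matrix.vecMulLinear B).comp (Matrix.vecMulLinear A) = Matrix.vecMulLinear (A * B) := by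
  apply LinearMap.ext
  intro x
  simp [Matrix.vecMulLinear_apply, Matrix.vecMul_vecMul]

lemma actS_actS {q : Type*} [Field q] {n : ℕ} (A B : GL (Fin n) q)
    (U : Submodule q (Fin n → q)) :
    actS q n B (actS q n A U) = actS q n (A * B) U := by
  unfold actS
  rw [← Submodule.map_comp, vecMulLinear_comp]
  rfl

lemma actS_one {q : Type*} [Field q] {n : ℕ} (U : Submodule q (Fin n → q)) :
    actS q n 1 U = U := by
  unfold actS
  have : Matrix.vecMulLinear ((1 : GL (Fin n) q) : Matrix (Fin n) (Fin n) q)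
      = LinearMap.id := by
    apply LinearMap.ext
    intro x
    simp [Matrix.vecMulLinear_apply]
  rw [this, Submodule.map_id]

lemma actS_inv_actS {q : Type*} [Field q] {n : ℕ} (A : GL (Fin n) q)
    (U : Submodule q (Fin n → q)) :
    actS q n A⁻¹ (actS q n A U) = U := by
  rw [actS_actS, mul_inv_cancel, actS_one]

lemma actS_actS_inv {q : Type*} [Field q] {n : ℕ} (A : GL (Fin n) q)
    (U : Submodule q (Fin n → q)) :
    actS q n A (actS q n A⁻¹ U) = U := by
  rw [actS_actS, inv_mul_cancel, actS_one]

lemma actS_strictMono {q : Type*} [Field q] {n : ℕ} (A : GL (Fin n) q) :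
    StrictMono (actS q n A) := by
  intro U V hUV
  refine lt_of_le_of_ne (Submodule.map_mono hUV.le) ?_
  intro h
  have : U = V := by
    have := congrArg (actS q n A⁻¹) h
    rwa [actS_inv_actS, actS_inv_actS] at this
  exact hUV.ne this

lemma actS_image_inv {q : Type*} [Field q] {n : ℕ} (A : GL (Fin n) q)
    (D : Set (Submodule q (Fin n → q))) (h : actS q n A '' D = D) :
    actS q n A⁻¹ '' D = D := by
  conv_lhs => rw [← h]
  rw [Set.image_image]
  simp only [actS_inv_actS, Set.image_id']

lemma mem_of_SIC {q : Type*} [Field q] {n r : ℕ}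
    {C : Set (Fin r → Submodule q (Fin n → q))} (hSIC : SIC q n r C)
    (hne : C.Nonempty)
    (F : Fin r → Submodule q (Fin n → q)) (hmono : StrictMono F)
    (hproj : ∀ i, F i ∈ proj q n r C i) : F ∈ C := by
  rcases Nat.eq_zero_or_pos r with hr | hr
  · obtain ⟨G, hG⟩ := hne
    have : F = G := by
      funext j
      exact absurd j.2 (by omega)
    rwa [this]
  · have key : ∀ k, k < r → ∃ H ∈ C, ∀ j : Fin r, j.val ≤ k → H j = F j := by
      intro k
      induction k with
      | zero =>
        intro hk
        obtain ⟨H, hH, hH0⟩ := hproj ⟨0, hk⟩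
        refine ⟨H, hH, fun j hj => ?_⟩
        have : j = ⟨0, hk⟩ := Fin.ext (Nat.le_zero.mp hj)
        rw [this]; exact hH0
      | succ k ih =>
        intro hk
        obtain ⟨H, hH, hHj⟩ := ih (by omega)
        obtain ⟨H', hH', hH'k⟩ := hproj ⟨k + 1, hk⟩
        have hlt : H ⟨k, by omega⟩ < H' ⟨k + 1, hk⟩ := by
          rw [hHj ⟨k, by omega⟩ (le_refl k)]
          exact lt_of_lt_of_eq (hmono (show (⟨k, by omega⟩ : Fin r) < ⟨k + 1, hk⟩ by
            simp [Fin.lt_def])) hH'k.symm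
        have hmem := hSIC H hH H' hH' k hk hlt
        refine ⟨_, hmem, ?_⟩
        intro j hj
        by_cases h : j.val ≤ k
        · simp only [h, if_true]
          exact hHj j h
        · have hje : j = ⟨k + 1, hk⟩ := Fin.ext (show j.val = k + 1 by omega)
          simp only [h, if_false]
          rw [hje]; exact hH'k
    obtain ⟨H, hH, hHj⟩ := key (r - 1) (by omega)
    have : H = F := funext fun j => hHj j (by omega)
    rwa [← this]

lemma proj_actC {q : Type*} [Field q] {n r : ℕ} (A : GL (Fin n) q)
    (C : Set (Fin r → Submodule q (Fin n → q))) (i : Fin r) :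
    proj q n r (actC q n r A C) i = actS q n A '' proj q n r C i := by
  unfold proj actC
  rw [Set.image_image, Set.image_image]

theorem aut_eq_iInter_aut_proj_of_SIC
    (q : Type*) [Field q] [Fintype q] (n r : ℕ) (t : Fin r → ℕ)
    (ht : StrictMono t) (htpos : ∀ i, 0 < t i) (htn : ∀ i, t i < n)
    (C : Set (Fin r → Submodule q (Fin n → q)))
    (hC : IsFlagCode q n r t C) (hfin : C.Finite) (hSIC : SIC q n r C) :
    {A : GL (Fin n) q | actC q n r A C = C} =
      ⋂ i : Fin r, {A : GL (Fin n) q | actS q n A '' proj q n r C i = proj q n r C i} := by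
  ext A
  simp only [Set.mem_setOf_eq, Set.mem_iInter]
  constructor
  · intro h i
    rw [← proj_actC, h]
  · intro h
    have hsub : ∀ (B : GL (Fin n) q),
        (∀ i, actS q n B '' proj q n r C i = proj q n r C i) →
        actC q n r B C ⊆ C := by
      intro B hB F hF
      obtain ⟨G, hG, rfl⟩ := hF
      refine mem_of_SIC hSIC hC.1 _ ?_ ?_
      · exact (actS_strictMono B).comp (hC.2 G hG).1
      · intro i
        rw [← hB i]
        exact ⟨G i, ⟨G, hG, rfl⟩, rfl⟩
    apply Set.Subset.antisymm (hsub A h)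
    intro G hG
    have hGinv : (fun i => actS q n A⁻¹ (G i)) ∈ C := by
      apply hsub A⁻¹ (fun i => actS_image_inv A _ (h i))
      exact ⟨G, hG, rfl⟩
    refine ⟨_, hGinv, ?_⟩
    funext i
    exact actS_actS_inv A (G i)
end
end

section
/- Let C be a disjoint flag code of type (t_1,...,t_r) on F_q^n, i.e., |C_i| = |C| for all i. Then C is increasing if and only if C is decreasing. -/
noncomputable section

open Submodule

theorem disjoint_increasing_iff_decreasing
    (q : Type*) [Field q] [Fintype q] (n r : ℕ) (t : Fin r → ℕ)
    (ht : StrictMono t) (htpos : ∀ i, 0 < t i) (htn : ∀ i, t i < n)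
    (C : Set (Fin r → Submodule q (Fin n → q)))
    (hC : IsFlagCode q n r t C) (hfin : C.Finite)
    (hdisj : ∀ i : Fin r, (proj q n r C i).ncard = C.ncard) :
    Increasing q n r C ↔ Decreasing q n r C := by
  have hinj : ∀ i : Fin r, Set.InjOn (fun F => F i) C := fun i =>
    (Set.ncard_image_iff hfin).mp (hdisj i)
  have hmono : ∀ F ∈ C, ∀ (i : ℕ) (hi : i + 1 < r),
      F ⟨i, by omega⟩ < F ⟨i + 1, hi⟩ := by
    intro F hF i hi
    exact (hC.2 F hF).1 (by simp [Fin.mk_lt_mk])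
  constructor
  · intro hInc i hi U hU
    obtain ⟨F, hF, rfl⟩ := hU
    refine ⟨F ⟨i + 1, hi⟩, ⟨⟨F, hF, rfl⟩, hmono F hF i hi⟩, ?_⟩
    rintro V ⟨⟨G, hG, rfl⟩, hlt⟩
    obtain ⟨W, _, huniq⟩ := hInc i hi (G ⟨i + 1, hi⟩) ⟨G, hG, rfl⟩
    have h1 := huniq (F ⟨i, by omega⟩) ⟨⟨F, hF, rfl⟩, hlt⟩
    have h2 := huniq (G ⟨i, by omega⟩) ⟨⟨G, hG, rfl⟩, hmono G hG i hi⟩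
    have hFG : F = G := hinj ⟨i, by omega⟩ hF hG (h1.trans h2.symm)
    rw [hFG]
  · intro hDec i hi V hV
    obtain ⟨G, hG, rfl⟩ := hV
    refine ⟨G ⟨i, by omega⟩, ⟨⟨G, hG, rfl⟩, hmono G hG i hi⟩, ?_⟩
    rintro U ⟨⟨F, hF, rfl⟩, hlt⟩
    obtain ⟨W, _, huniq⟩ := hDec i hi (F ⟨i, by omega⟩) ⟨F, hF, rfl⟩
    have h1 := huniq (G ⟨i + 1, hi⟩) ⟨⟨G, hG, rfl⟩, hlt⟩
    have h2 := huniq (F ⟨i + 1, hi⟩) ⟨⟨F, hF, rfl⟩, hmono F hF i hi⟩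
    have hFG : F = G := hinj ⟨i + 1, hi⟩ hF hG (h2.trans h1.symm)
    rw [hFG]
end
end

section
/- Every increasing flag code is subspace-inclusion-closed (SIC). Consequently (combined with the multiplicity property) every increasing flag code is determined by its projected codes. -/
noncomputable section

open Submodule

lemma inc_key (q : Type*) [Field q] (n r : ℕ)
    (C : Set (Fin r → Submodule q (Fin n → q)))
    (hinc : Increasing q n r C)
    (F G : Fin r → Submodule q (Fin n → q))
    (hF : StrictMono F) (hG : StrictMono G)
    (hFp : ∀ j, F j ∈ proj q n r C j) (hGp : ∀ j, G j ∈ proj q n r C j) :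
    ∀ d (j : Fin r) (hd : j.val + d < r),
      F ⟨j.val + d, hd⟩ = G ⟨j.val + d, hd⟩ → F j = G j := by
  intro d
  induction d with
  | zero =>
    intro j hd h
    have : (⟨j.val + 0, hd⟩ : Fin r) = j := Fin.ext (by simp)
    rwa [this] at h
  | succ d ih =>
    intro j hd h
    have hj1 : j.val + 1 < r := by omega
    set j' : Fin r := ⟨j.val + 1, hj1⟩ with hj'
    have h' : F j' = G j' := by
      apply ih j' (by simp [hj']; omega)
      have : (⟨j'.val + d, by simp [hj']; omega⟩ : Fin r) = ⟨j.val + (d + 1), hd⟩ :=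
        Fin.ext (by simp [hj']; omega)
      rw [this]; exact h
    obtain ⟨U, _, hun⟩ := hinc j.val hj1 (F j') (hFp j')
    have hjj : (⟨j.val, by omega⟩ : Fin r) = j := Fin.ext (by simp)
    have hFj : F j ∈ proj q n r C ⟨j.val, by omega⟩ ∧ F j < F j' := by
      refine ⟨?_, hF (by simp [hj', Fin.lt_def])⟩
      rw [hjj]; exact hFp j
    have hGj : G j ∈ proj q n r C ⟨j.val, by omega⟩ ∧ G j < F j' := by
      refine ⟨?_, ?_⟩
      · rw [hjj]; exact hGp j
      · rw [h']; exact hG (by simp [hj', Fin.lt_def])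
    rw [hun (F j) hFj, hun (G j) hGj]

theorem increasing_SIC_and_determined
    (q : Type*) [Field q] [Fintype q] (n r : ℕ) (t : Fin r → ℕ)
    (ht : StrictMono t) (htpos : ∀ i, 0 < t i) (htn : ∀ i, t i < n)
    (C : Set (Fin r → Submodule q (Fin n → q)))
    (hC : IsFlagCode q n r t C)
    (hinc : Increasing q n r C) :
    SIC q n r C ∧ ∀ C', GeneratedBy q n r t (proj q n r C) C' → C' = C := by
  have memproj : ∀ F ∈ C, ∀ j, F j ∈ proj q n r C j := fun F hF j => ⟨F, hF, rfl⟩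
  constructor
  · intro F hF F' hF' i hi hlt
    have hFfl := (hC.2 F hF).1
    have hF'fl := (hC.2 F' hF').1
    obtain ⟨U, _, hun⟩ := hinc i hi (F' ⟨i + 1, hi⟩) (memproj F' hF' _)
    have h1 : F ⟨i, by omega⟩ = F' ⟨i, by omega⟩ := by
      rw [hun _ ⟨memproj F hF _, hlt⟩,
        hun _ ⟨memproj F' hF' _, hF'fl (by simp [Fin.lt_def])⟩]
    have hall : ∀ j : Fin r, j.val ≤ i → F j = F' j := by
      intro j hj
      apply inc_key q n r C hinc F F' hFfl hF'fl (memproj F hF) (memproj F' hF')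
        (i - j.val) j (by omega)
      have : (⟨j.val + (i - j.val), by omega⟩ : Fin r) = ⟨i, by omega⟩ :=
        Fin.ext (by simp; omega)
      rw [this]; exact h1
    have heq : (fun j : Fin r => if j.val ≤ i then F j else F' j) = F' := by
      funext j
      by_cases hj : j.val ≤ i
      · simp [hj, hall j hj]
      · simp [hj]
    rw [heq]; exact hF'
  · intro C' ⟨hC', hproj⟩
    rcases Nat.eq_zero_or_pos r with hr | hr
    · subst hr
      obtain ⟨F, hF⟩ := hC.1
      obtain ⟨F', hF'⟩ := hC'.1
      have hFF : ∀ (G H : Fin 0 → Submodule q (Fin n → q)), G = H := by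
        intro G H; funext j; exact absurd j.isLt (by omega)
      ext G
      constructor
      · intro _; rwa [hFF G F]
      · intro _; rwa [hFF G F']
    · set top : Fin r := ⟨r - 1, by omega⟩ with htopd
      have same : ∀ F ∈ C, ∀ G ∈ C', F top = G top → F = G := by
        intro F hF G hG h
        have hFfl := (hC.2 F hF).1
        have hGfl := (hC'.2 G hG).1
        have hGp : ∀ j, G j ∈ proj q n r C j := by
          intro j; rw [← hproj j]; exact ⟨G, hG, rfl⟩
        funext j
        apply inc_key q n r C hinc F G hFfl hGfl (memproj F hF) hGp
          (r - 1 - j.val) j (by omega)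
        have : (⟨j.val + (r - 1 - j.val), by omega⟩ : Fin r) = top :=
          Fin.ext (by simp [htopd]; omega)
        rw [this]; exact h
      ext G
      constructor
      · intro hG
        have hmem : G top ∈ proj q n r C' top := ⟨G, hG, rfl⟩
        rw [hproj] at hmem
        obtain ⟨F, hF, hFG⟩ := hmem
        rw [← same F hF G hG hFG]; exact hF
      · intro hG
        have hmem : G top ∈ proj q n r C top := ⟨G, hG, rfl⟩
        rw [← hproj] at hmem
        obtain ⟨F, hF, hFG⟩ := hmem
        rw [same G hG F hF hFG.symm]; exact hF
end
end

section
/- Let C be a flag code of type (t_1,...,t_r) on F_q^n such that every projected code C_i has maximum subspace distance. If t_1 ≥ n/2, then C is increasing; if t_r ≤ n/2, then C is decreasing. -/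
set_option maxHeartbeats 1000000
noncomputable section

open Submodule

theorem aux_inc (q : Type*) [Field q] (n : ℕ) (U W V : Submodule q (Fin n → q))
    (tU tV : ℕ)
    (hrU : Module.finrank q ↥U = tU) (hrW : Module.finrank q ↥W = tU)
    (hrV : Module.finrank q ↥V = tV)
    (hd : Module.finrank q ↥(U ⊔ W) - Module.finrank q ↥(U ⊓ W) =
      min (2 * tU) (2 * (n - tU)))
    (htU : tU < n) (htV : tV < n) (hn : n ≤ 2 * tU)
    (hUV : U ≤ V) (hWV : W ≤ V) : False := by
  have hsum := Submodule.finrank_sup_add_finrank_inf_eq (K := q) U W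
  rw [hrU, hrW] at hsum
  have hle : Module.finrank q ↥(U ⊓ W) ≤ Module.finrank q ↥(U ⊔ W) :=
    Submodule.finrank_mono (le_trans inf_le_left le_sup_left)
  have hsup : Module.finrank q ↥(U ⊔ W) ≤ tV := by
    rw [← hrV]; exact Submodule.finrank_mono (sup_le hUV hWV)
  omega

theorem aux_dec (q : Type*) [Field q] (n : ℕ) (V W U : Submodule q (Fin n → q))
    (tV tU : ℕ)
    (hrV : Module.finrank q ↥V = tV) (hrW : Module.finrank q ↥W = tV)
    (hrU : Module.finrank q ↥U = tU)
    (hd : Module.finrank q ↥(V ⊔ W) - Module.finrank q ↥(V ⊓ W) =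
      min (2 * tV) (2 * (n - tV)))
    (htV : tV < n) (htU : 0 < tU) (hn : 2 * tV ≤ n)
    (hUV : U ≤ V) (hUW : U ≤ W) : False := by
  have hsum := Submodule.finrank_sup_add_finrank_inf_eq (K := q) V W
  rw [hrV, hrW] at hsum
  have hle : Module.finrank q ↥(V ⊓ W) ≤ Module.finrank q ↥(V ⊔ W) :=
    Submodule.finrank_mono (le_trans inf_le_left le_sup_left)
  have hinf : tU ≤ Module.finrank q ↥(V ⊓ W) := by
    rw [← hrU]; exact Submodule.finrank_mono (le_inf hUV hUW)
  omega

theorem maxdist_increasing_or_decreasing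
    (q : Type*) [Field q] [Fintype q] (n r : ℕ) (t : Fin r → ℕ)
    (hr : 0 < r)
    (ht : StrictMono t) (htpos : ∀ i, 0 < t i) (htn : ∀ i, t i < n)
    (C : Set (Fin r → Submodule q (Fin n → q)))
    (hC : IsFlagCode q n r t C)
    (hmax : ∀ i : Fin r, maxDist q n (t i) (proj q n r C i)) :
    (n ≤ 2 * t ⟨0, hr⟩ → Increasing q n r C) ∧
      (2 * t ⟨r - 1, by omega⟩ ≤ n → Decreasing q n r C) := by
  obtain ⟨⟨F₀, hF₀⟩, hflag⟩ := hC
  constructor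
  · -- increasing
    intro hn i hi V hV
    obtain ⟨F, hF, hFi⟩ := hV
    have hlt : F ⟨i, by omega⟩ < V := by
      rw [← hFi]; exact (hflag F hF).1 (by simp [Fin.lt_def])
    refine ⟨F ⟨i, by omega⟩, ⟨⟨F, hF, rfl⟩, hlt⟩, ?_⟩
    rintro U ⟨hU, hUV⟩
    by_contra hne'
    have hd : Module.finrank q ↥(U ⊔ F ⟨i, by omega⟩) -
        Module.finrank q ↥(U ⊓ F ⟨i, by omega⟩) =
        min (2 * t ⟨i, by omega⟩) (2 * (n - t ⟨i, by omega⟩)) :=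
      hmax ⟨i, by omega⟩ U hU (F ⟨i, by omega⟩) ⟨F, hF, rfl⟩ hne'
    obtain ⟨G, hG, hGi⟩ := hU
    have hrU : Module.finrank q ↥U = t ⟨i, by omega⟩ := by
      rw [← hGi]; exact (hflag G hG).2 _
    have hrF : Module.finrank q ↥(F ⟨i, by omega⟩) = t ⟨i, by omega⟩ :=
      (hflag F hF).2 _
    have hVr : Module.finrank q ↥V = t ⟨i + 1, hi⟩ := by
      rw [← hFi]; exact (hflag F hF).2 _
    have ht0 : t ⟨0, hr⟩ ≤ t (⟨i, by omega⟩ : Fin r) := ht.monotone (by simp [Fin.le_def])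
    exact aux_inc q n U (F ⟨i, by omega⟩) V (t ⟨i, by omega⟩) (t ⟨i + 1, hi⟩)
      hrU hrF hVr hd (htn _) (htn _) (by omega) (le_of_lt hUV) (le_of_lt hlt)
  · -- decreasing
    intro hn i hi U hU
    obtain ⟨F, hF, hFi⟩ := hU
    have hlt : U < F ⟨i + 1, hi⟩ := by
      rw [← hFi]; exact (hflag F hF).1 (by simp [Fin.lt_def])
    refine ⟨F ⟨i + 1, hi⟩, ⟨⟨F, hF, rfl⟩, hlt⟩, ?_⟩
    rintro V ⟨hV, hUV⟩
    by_contra hne'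
    have hd : Module.finrank q ↥(V ⊔ F ⟨i + 1, hi⟩) -
        Module.finrank q ↥(V ⊓ F ⟨i + 1, hi⟩) =
        min (2 * t ⟨i + 1, hi⟩) (2 * (n - t ⟨i + 1, hi⟩)) :=
      hmax ⟨i + 1, hi⟩ V hV (F ⟨i + 1, hi⟩) ⟨F, hF, rfl⟩ hne'
    obtain ⟨G, hG, hGi⟩ := hV
    have hrV : Module.finrank q ↥V = t ⟨i + 1, hi⟩ := by
      rw [← hGi]; exact (hflag G hG).2 _
    have hrF : Module.finrank q ↥(F ⟨i + 1, hi⟩) = t ⟨i + 1, hi⟩ :=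
      (hflag F hF).2 _
    have hrU : Module.finrank q ↥U = t ⟨i, by omega⟩ := by
      rw [← hFi]; exact (hflag F hF).2 _
    have htr : t (⟨i + 1, hi⟩ : Fin r) ≤ t ⟨r - 1, by omega⟩ :=
      ht.monotone (by simp [Fin.le_def]; omega)
    exact aux_dec q n V (F ⟨i + 1, hi⟩) U (t ⟨i + 1, hi⟩) (t ⟨i, by omega⟩)
      hrV hrF hrU hd (htn _) (htpos _) (by omega) (le_of_lt hUV) (le_of_lt hlt)
end
end

section
/- Let C be a flag code of type (t_1,...,t_r) on F_q^n with t_1 ≤ n/2 ≤ t_r, all of whose projected codes have maximum subspace distance. Let t_a = max{t_i : 2t_i ≤ n} and t_b = min{t_i : 2t_i ≥ n}. If t_b < 2t_a and |C_1| = ... = |C_a|, then C is increasing. -/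
noncomputable section

open Submodule

/-!
The subspace of `C_i` below `V ∈ C_{i+1}` exists because the codewords are flags; the point is
uniqueness. Two distinct `U, U' ∈ C_i` of maximum distance span a space of dimension
`min (2 t_i) n`, which must fit inside `V`. If `2 t_i ≥ n` this is impossible as `dim V < n`.
If `2 t_{i+1} ≤ n`, the codewords of `C_{i+1}` pairwise meet trivially, so each codeword of `C_i`
lies in exactly one of them; the resulting surjection `C_i → C_{i+1}` is injective because
`|C_i| = |C_{i+1}|`. In the remaining case `t_i = t_a` and `t_{i+1} = t_b`, and `2 t_a ≤ t_b`
contradicts `t_b < 2 t_a`.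
-/

theorem Set.eq_of_rel_of_ncard_eq {α β : Type*} {A : Set α} {B : Set β} (R : α → β → Prop)
    (hA : A.Finite) (hcard : A.ncard = B.ncard)
    (hex : ∀ a ∈ A, ∃ b ∈ B, R a b) (huniq : ∀ a ∈ A, ∀ b ∈ B, ∀ b' ∈ B, R a b → R a b' → b = b')
    (hsurj : ∀ b ∈ B, ∃ a ∈ A, R a b)
    {a a' : α} (ha : a ∈ A) (ha' : a' ∈ A) {b : β} (hb : b ∈ B) (hab : R a b) (ha'b : R a' b) :
    a = a' := by
  have : Nonempty β := ⟨b⟩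
  choose! f hfB hfR using hex
  have himage : f '' A = B := Set.SurjOn.image_eq_of_mapsTo
    (fun b hb ↦ by
      obtain ⟨a, ha, hab⟩ := hsurj b hb
      exact ⟨a, ha, huniq a ha _ (hfB a ha) b hb (hfR a ha) hab⟩)
    hfB
  have hinj : A.InjOn f := Set.injOn_of_ncard_image_eq (by rw [himage, hcard]) hA
  exact hinj ha ha' <| (huniq a ha _ (hfB a ha) b hb (hfR a ha) hab).trans
    (huniq a' ha' _ (hfB a' ha') b hb (hfR a' ha') ha'b).symm

section SubspaceDistance

variable {q : Type*} [Field q] {n k : ℕ}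

theorem two_mul_finrank_sup_eq {U V : Submodule q (Fin n → q)}
    (hU : Module.finrank q U = k) (hV : Module.finrank q V = k) :
    2 * Module.finrank q ↥(U ⊔ V) = 2 * k + distS q n U V := by
  have hsum := Submodule.finrank_sup_add_finrank_inf_eq U V
  have hle := Submodule.finrank_mono (inf_le_sup : U ⊓ V ≤ U ⊔ V)
  unfold distS
  omega

variable {D : Set (Submodule q (Fin n → q))} {U V : Submodule q (Fin n → q)}

theorem maxDist.finrank_sup_eq (hD : maxDist q n k D) (hU : U ∈ D) (hV : V ∈ D) (hne : U ≠ V)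
    (hUk : Module.finrank q U = k) (hVk : Module.finrank q V = k) :
    Module.finrank q ↥(U ⊔ V) = min (2 * k) n := by
  have h2 := two_mul_finrank_sup_eq hUk hVk
  have hd := hD U hU V hV hne
  have hkn := Submodule.finrank_le U
  rw [Module.finrank_fin_fun, hUk] at hkn
  omega

theorem maxDist.inf_eq_bot (hD : maxDist q n k D) (hk : 2 * k ≤ n) (hU : U ∈ D) (hV : V ∈ D)
    (hne : U ≠ V) (hUk : Module.finrank q U = k) (hVk : Module.finrank q V = k) :
    U ⊓ V = ⊥ := by
  have hsup := hD.finrank_sup_eq hU hV hne hUk hVk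
  have hsum := Submodule.finrank_sup_add_finrank_inf_eq U V
  exact Submodule.finrank_eq_zero.mp (by omega)

end SubspaceDistance

section FlagCode

variable {q : Type*} [Field q] {n r : ℕ} {t : Fin r → ℕ} {C : Set (Fin r → Submodule q (Fin n → q))}

theorem IsFlagCode.finrank_of_mem_proj (hC : IsFlagCode q n r t C) {i : Fin r}
    {U : Submodule q (Fin n → q)} (hU : U ∈ proj q n r C i) : Module.finrank q U = t i := by
  obtain ⟨F, hF, rfl⟩ := hU
  exact (hC.2 F hF).2 i

theorem IsFlagCode.eq_of_le_of_ncard_proj_eq (hC : IsFlagCode q n r t C) (hfin : C.Finite)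
    {i j : Fin r} (hij : i ≤ j) (hti : 0 < t i) (htj : 2 * t j ≤ n)
    (hmax : maxDist q n (t j) (proj q n r C j))
    (hcard : (proj q n r C i).ncard = (proj q n r C j).ncard)
    {U U' V : Submodule q (Fin n → q)} (hU : U ∈ proj q n r C i) (hU' : U' ∈ proj q n r C i)
    (hV : V ∈ proj q n r C j) (hUV : U ≤ V) (hU'V : U' ≤ V) : U = U' := by
  refine Set.eq_of_rel_of_ncard_eq (· ≤ ·) (hfin.image _) hcard ?_ ?_ ?_ hU hU' hV hUV hU'V
  · rintro _ ⟨F, hF, rfl⟩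
    exact ⟨F j, ⟨F, hF, rfl⟩, (hC.2 F hF).1.monotone hij⟩
  · intro W hW V₁ hV₁ V₂ hV₂ hWV₁ hWV₂
    by_contra hne
    have hbot := hmax.inf_eq_bot htj hV₁ hV₂ hne (hC.finrank_of_mem_proj hV₁)
      (hC.finrank_of_mem_proj hV₂)
    have hW₀ : W = ⊥ := le_bot_iff.mp (hbot ▸ le_inf hWV₁ hWV₂)
    have hWrank := hC.finrank_of_mem_proj hW
    rw [hW₀, finrank_bot] at hWrank
    omega
  · rintro _ ⟨F, hF, rfl⟩
    exact ⟨F i, ⟨F, hF, rfl⟩, (hC.2 F hF).1.monotone hij⟩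

end FlagCode

theorem maxdist_increasing_of_tb_lt_two_ta
    (q : Type*) [Field q] (n r : ℕ) (t : Fin r → ℕ)
    (ht : StrictMono t) (htpos : ∀ i, 0 < t i) (htn : ∀ i, t i < n)
    (C : Set (Fin r → Submodule q (Fin n → q)))
    (hC : IsFlagCode q n r t C) (hfin : C.Finite)
    (hmax : ∀ i : Fin r, maxDist q n (t i) (proj q n r C i))
    (a b : Fin r)
    (ha1 : 2 * t a ≤ n) (ha2 : ∀ i, 2 * t i ≤ n → t i ≤ t a)
    (hb1 : n ≤ 2 * t b)
    (hab : t b < 2 * t a)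
    (hcard : ∀ i : Fin r, i ≤ a → (proj q n r C i).ncard = (proj q n r C a).ncard) :
    Increasing q n r C := by
  intro i hi V hV
  set i₀ : Fin r := ⟨i, by omega⟩
  set i₁ : Fin r := ⟨i + 1, hi⟩
  have hcov : i₀ ⋖ i₁ := Fin.covBy_iff.mpr (Nat.covBy_iff_add_one_eq.mpr rfl)
  obtain ⟨F, hF, rfl⟩ := hV
  have hFU : F i₀ ∈ proj q n r C i₀ := ⟨F, hF, rfl⟩
  refine ⟨F i₀, ⟨hFU, (hC.2 F hF).1 hcov.lt⟩, ?_⟩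
  rintro U ⟨hU, hUF⟩
  by_contra hne
  have hspan : min (2 * t i₀) n ≤ t i₁ := by
    rw [← hmax i₀ |>.finrank_sup_eq hU hFU hne (hC.finrank_of_mem_proj hU)
      (hC.finrank_of_mem_proj hFU), ← (hC.2 F hF).2 i₁]
    exact Submodule.finrank_mono (sup_le hUF.le ((hC.2 F hF).1 hcov.lt).le)
  have hti₁ := htn i₁
  by_cases hi₁ : 2 * t i₁ ≤ n
  · have hi₁a : i₁ ≤ a := ht.le_iff_le.mp (ha2 i₁ hi₁)
    exact hne <| hC.eq_of_le_of_ncard_proj_eq hfin hcov.le (htpos i₀) hi₁ (hmax i₁)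
      ((hcard i₀ (hcov.le.trans hi₁a)).trans (hcard i₁ hi₁a).symm) hU hFU ⟨F, hF, rfl⟩
      hUF.le ((hC.2 F hF).1 hcov.lt).le
  · have hb : t i₁ ≤ t b := ht.monotone (hcov.ge_of_gt (ht.lt_iff_lt.mp (by omega)))
    have ha : t a ≤ t i₀ := ht.monotone (hcov.le_of_lt (ht.lt_iff_lt.mp (by omega)))
    omega
end
end
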